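/- Let V be an isometry on a Hilbert space K, A a positive bounded operator on K, and λ ∈ ℂ with |λ| < 1 such that A - b_λ(V)* A b_λ(V) is a positive operator, where b_λ(V) = (V-λ)(I-conj(λ)V)⁻¹. If {x_n} is an orthonormal basis of K consisting of vectors on which b_λ(V) acts as a shift (b_λ(V) x_n = x_{n+1} along each orbit indexed over ℕ or ℤ, with k orbits indexed by ℕ and ℓ orbits indexed by ℤ), then A - b_λ(V)* A b_λ(V) is of trace class with trace-norm at most (k + ℓ)·‖A‖. -/

import Mathlib

open scoped InnerProductSpace ComplexConjugate
open ContinuousLinearMap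

/-- The Möbius transform `b_λ(V) = (V - λI)(I - conj(λ)V)⁻¹`. -/
noncomputable def blam {K : Type*} [NormedAddCommGroup K] [InnerProductSpace ℂ K]
    [CompleteSpace K] (V : K →L[ℂ] K) (l : ℂ) : K →L[ℂ] K :=
  (V - l • (1 : K →L[ℂ] K)) * Ring.inverse ((1 : K →L[ℂ] K) - conj l • V)

/-!
With `aₓ = Re ⟪A eₓ, eₓ⟫ ∈ [0, ‖A‖]`, the diagonal entry of `D = A - B* A B` at `eₓ` is
`aₓ - a_{Bx}` because `B = b_λ(V)` shifts the basis. Positivity of `D` makes `a` nonincreasing along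
each orbit, so the partial sums over an orbit telescope to at most `‖A‖`, and there are `k + ℓ`
orbits.
-/

theorem summable_and_tsum_le_of_telescoping_nat {f a : ℕ → ℝ} {c : ℝ}
    (hf : ∀ n, f n = a n - a (n + 1)) (hf₀ : ∀ n, 0 ≤ f n) (hc : ∀ n, c ≤ a n) :
    Summable f ∧ ∑' n, f n ≤ a 0 - c := by
  have partial_le : ∀ N, ∑ n ∈ Finset.range N, f n ≤ a 0 - c := fun N => by
    rw [Finset.sum_congr rfl fun n _ => hf n, Finset.sum_range_sub']
    linarith [hc N]
  exact ⟨summable_of_sum_range_le hf₀ partial_le, Real.tsum_le_of_sum_range_le hf₀ partial_le⟩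

theorem summable_and_tsum_le_of_telescoping_int {f a : ℤ → ℝ} {c M : ℝ}
    (hf : ∀ n, f n = a n - a (n + 1)) (hf₀ : ∀ n, 0 ≤ f n) (hc : ∀ n, c ≤ a n)
    (hM : ∀ n, a n ≤ M) :
    Summable f ∧ ∑' n, f n ≤ M - c := by
  obtain ⟨hpos, hpos_le⟩ := summable_and_tsum_le_of_telescoping_nat (f := fun n : ℕ => f n)
    (a := fun n : ℕ => a n) (fun n => by exact_mod_cast hf n) (fun n => hf₀ n) (fun n => hc n)
  -- On the negative half the sums telescope the other way: `-a (-n)` plays the role of `a`.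
  obtain ⟨hneg, hneg_le⟩ := summable_and_tsum_le_of_telescoping_nat
    (f := fun n : ℕ => f (-(n + 1))) (a := fun n : ℕ => -a (-n)) (c := -M)
    (fun n => by rw [hf]; push_cast; ring_nf) (fun n => hf₀ _) (fun n => neg_le_neg (hM _))
  refine ⟨hpos.of_nat_of_neg_add_one hneg, ?_⟩
  rw [tsum_of_nat_of_neg_add_one hpos hneg]
  simp only [Nat.cast_zero, neg_zero] at hpos_le hneg_le
  linarith

theorem summable_and_tsum_prod_le_of_nonneg {β γ : Type*} [Fintype β] {f : β × γ → ℝ}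
    (hf : 0 ≤ f) {C : ℝ} (h : ∀ b, Summable (fun c => f (b, c)) ∧ ∑' c, f (b, c) ≤ C) :
    Summable f ∧ ∑' p, f p ≤ Fintype.card β * C := by
  have hsum : Summable f :=
    (summable_prod_of_nonneg hf).2 ⟨fun b => (h b).1, Summable.of_finite⟩
  refine ⟨hsum, ?_⟩
  calc ∑' p, f p = ∑ b, ∑' c, f (b, c) := by rw [hsum.tsum_prod, tsum_fintype]
    _ ≤ ∑ _b : β, C := Finset.sum_le_sum fun b _ => (h b).2
    _ = Fintype.card β * C := by simp

section InnerProduct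

variable {𝕜 E : Type*} [RCLike 𝕜] [NormedAddCommGroup E] [InnerProductSpace 𝕜 E]

open RCLike

theorem re_inner_apply_self_le_opNorm (A : E →L[𝕜] E) {x : E} (hx : ‖x‖ = 1) :
    re ⟪A x, x⟫_𝕜 ≤ ‖A‖ :=
  calc re ⟪A x, x⟫_𝕜 ≤ ‖A x‖ * ‖x‖ := re_inner_le_norm _ _
    _ ≤ ‖A‖ * ‖x‖ * ‖x‖ := by gcongr; exact A.le_opNorm x
    _ = ‖A‖ := by rw [hx, mul_one, mul_one]

theorem re_inner_sub_adjoint_comp_comp_apply_self [CompleteSpace E] (A B : E →L[𝕜] E) (x : E) :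
    re ⟪(A - (adjoint B).comp (A.comp B)) x, x⟫_𝕜 = re ⟪A x, x⟫_𝕜 - re ⟪A (B x), B x⟫_𝕜 := by
  rw [sub_apply, inner_sub_left, map_sub, comp_apply, comp_apply, adjoint_inner_left]

end InnerProduct

theorem traceNorm_bound_along_shift_basis_general {K : Type*} [NormedAddCommGroup K]
    [InnerProductSpace ℂ K] [CompleteSpace K] (V : K →L[ℂ] K)
    (A : K →L[ℂ] K) (hA : A.IsPositive)
    (l : ℂ) (k L : ℕ)
    (hD : (A - ((adjoint (blam V l)).comp (A.comp (blam V l)))).IsPositive)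
    (e : HilbertBasis ((Fin k × ℕ) ⊕ (Fin L × ℤ)) ℂ K)
    (he₁ : ∀ (i : Fin k) (n : ℕ),
      blam V l (e (Sum.inl (i, n))) = e (Sum.inl (i, n + 1)))
    (he₂ : ∀ (j : Fin L) (n : ℤ),
      blam V l (e (Sum.inr (j, n))) = e (Sum.inr (j, n + 1))) :
    Summable (fun x => (⟪(A - ((adjoint (blam V l)).comp (A.comp (blam V l))))
        (e x), e x⟫_ℂ).re) ∧
      ∑' x, (⟪(A - ((adjoint (blam V l)).comp (A.comp (blam V l))))
        (e x), e x⟫_ℂ).re ≤ (k + L) * ‖A‖ := by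
  set d := fun x => (⟪(A - ((adjoint (blam V l)).comp (A.comp (blam V l)))) (e x), e x⟫_ℂ).re
  set a := fun x => (⟪A (e x), e x⟫_ℂ).re
  have hd₀ : 0 ≤ d := fun x => hD.re_inner_nonneg_left (e x)
  have ha₀ : ∀ x, 0 ≤ a x := fun x => hA.re_inner_nonneg_left (e x)
  have ha_le : ∀ x, a x ≤ ‖A‖ := fun x => re_inner_apply_self_le_opNorm A (e.orthonormal.1 x)
  have hd : ∀ x, d x = a x - (⟪A (blam V l (e x)), blam V l (e x)⟫_ℂ).re := fun x =>
    re_inner_sub_adjoint_comp_comp_apply_self A (blam V l) (e x)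
  have orbit_ℕ : ∀ i, Summable (fun n => d (Sum.inl (i, n))) ∧
      ∑' n, d (Sum.inl (i, n)) ≤ ‖A‖ := fun i =>
    (summable_and_tsum_le_of_telescoping_nat (fun n => by rw [hd, he₁]) (fun n => hd₀ _)
      (fun n => ha₀ _)).imp_right fun h => h.trans ((sub_zero _).trans_le (ha_le _))
  have orbit_ℤ : ∀ j, Summable (fun n => d (Sum.inr (j, n))) ∧
      ∑' n, d (Sum.inr (j, n)) ≤ ‖A‖ := fun j =>
    (summable_and_tsum_le_of_telescoping_int (fun n => by rw [hd, he₂]) (fun n => hd₀ _)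
      (fun n => ha₀ _) (fun n => ha_le _)).imp_right fun h => h.trans_eq (sub_zero _)
  obtain ⟨hsum_ℕ, hle_ℕ⟩ := summable_and_tsum_prod_le_of_nonneg (fun p => hd₀ (Sum.inl p)) orbit_ℕ
  obtain ⟨hsum_ℤ, hle_ℤ⟩ := summable_and_tsum_prod_le_of_nonneg (fun p => hd₀ (Sum.inr p)) orbit_ℤ
  rw [Fintype.card_fin] at hle_ℕ hle_ℤ
  refine ⟨hsum_ℕ.sum d hsum_ℤ, ?_⟩
  rw [hsum_ℕ.tsum_sum (f := d) hsum_ℤ, add_mul]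
  exact add_le_add hle_ℕ hle_ℤ

/-- Let `V` be an isometry on `K`, `A ≥ 0` bounded, `|λ| < 1`, and suppose
`D = A - b_λ(V)* A b_λ(V) ≥ 0`. If `K` has an orthonormal basis consisting of `k`
orbits indexed by `ℕ` and `ℓ` orbits indexed by `ℤ`, on each of which `b_λ(V)` acts as
the shift `xₙ ↦ xₙ₊₁`, then `D` is of trace class with trace norm (the diagonal sum of
the positive operator `D` over this basis) at most `(k + ℓ)‖A‖`. -/
theorem traceNorm_bound_along_shift_basis {K : Type*} [NormedAddCommGroup K]
    [InnerProductSpace ℂ K] [CompleteSpace K] (V : K →L[ℂ] K)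
    (hV : ∀ x : K, ‖V x‖ = ‖x‖) (A : K →L[ℂ] K) (hA : A.IsPositive)
    (l : ℂ) (hl : ‖l‖ < 1) (k L : ℕ)
    (hD : (A - ((adjoint (blam V l)).comp (A.comp (blam V l)))).IsPositive)
    (e : HilbertBasis ((Fin k × ℕ) ⊕ (Fin L × ℤ)) ℂ K)
    (he₁ : ∀ (i : Fin k) (n : ℕ),
      blam V l (e (Sum.inl (i, n))) = e (Sum.inl (i, n + 1)))
    (he₂ : ∀ (j : Fin L) (n : ℤ),
      blam V l (e (Sum.inr (j, n))) = e (Sum.inr (j, n + 1))) :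
    Summable (fun x => (⟪(A - ((adjoint (blam V l)).comp (A.comp (blam V l))))
        (e x), e x⟫_ℂ).re) ∧
      ∑' x, (⟪(A - ((adjoint (blam V l)).comp (A.comp (blam V l))))
        (e x), e x⟫_ℂ).re ≤ (k + L) * ‖A‖ :=
  traceNorm_bound_along_shift_basis_general V A hA l k L hD e he₁ he₂
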